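/- Let α = √(3 + 2√2) and let F = x₀⁴ + x₀x₄³ + x₁⁴ − 6x₁²x₂² + x₂⁴ + x₃⁴ + x₃³x₄, regarded as a polynomial function on ℂ⁵. Set v = (0, α, 1, 0, 0) ∈ ℂ⁵. Then: (i) F(v) = 0 and v₁ = α·v₂, i.e. the point o = [0 : α : 1 : 0 : 0] lies on the Segre quartic X = {F = 0} and on the hyperplane Π = {x₁ = αx₂}; and (ii) for every p ∈ ℂ⁵ with F(p) = 0 and p₁ = α·p₂, and for all scalars s, t ∈ ℂ, the point s·p + t·v satisfies F(s·p + t·v) = 0 and (s·p + t·v)₁ = α·(s·p + t·v)₂. In particular, the hyperplane section X ∩ Π is a cone in Π ≅ ℙ³ with vertex o: every point of X ∩ Π lies on a projective line through o that is entirely contained in X ∩ Π. -/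

import Mathlib

/-- α = √(3 + 2√2). -/
noncomputable def segreAlpha : ℝ := Real.sqrt (3 + 2 * Real.sqrt 2)

/-- The Segre quartic polynomial, regarded as a function on ℂ⁵. -/
noncomputable def segreQuarticFun (x : Fin 5 → ℂ) : ℂ :=
  x 0 ^ 4 + x 0 * x 4 ^ 3 + x 1 ^ 4 - 6 * x 1 ^ 2 * x 2 ^ 2 + x 2 ^ 4 +
    x 3 ^ 4 + x 3 ^ 3 * x 4

/-- The vector v = (0, α, 1, 0, 0) ∈ ℂ⁵, representing the point o = [0 : α : 1 : 0 : 0]. -/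
noncomputable def segreVertex : Fin 5 → ℂ := ![0, (segreAlpha : ℂ), 1, 0, 0]

/-! On the hyperplane `x₁ = α x₂` the binary quartic `x₁⁴ - 6x₁²x₂² + x₂⁴` vanishes, because
`α² = 3 + 2√2` is a root of `y² - 6y + 1`. What is left of `F` only involves `x₀, x₃, x₄`,
which are the coordinates in which the vertex `v` vanishes; so moving along `v` does not change
`F` on the hyperplane, and `F(s p + t v) = s⁴ F(p)`. -/

lemma segreAlpha_sq : segreAlpha ^ 2 = 3 + 2 * √2 :=
  Real.sq_sqrt (by positivity)

lemma segreAlpha_pow_four_sub_six_mul_sq_add_one :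
    (segreAlpha : ℂ) ^ 4 - 6 * (segreAlpha : ℂ) ^ 2 + 1 = 0 := by
  have h : segreAlpha ^ 4 - 6 * segreAlpha ^ 2 + 1 = 0 := by
    have hsqrt : √2 ^ 2 = 2 := Real.sq_sqrt (by norm_num)
    linear_combination (segreAlpha ^ 2 - 3 + 2 * √2) * segreAlpha_sq + 4 * hsqrt
  exact_mod_cast h

lemma segreQuarticFun_eq_of_apply_one_eq {x : Fin 5 → ℂ} (hx : x 1 = segreAlpha * x 2) :
    segreQuarticFun x = x 0 ^ 4 + x 0 * x 4 ^ 3 + x 3 ^ 4 + x 3 ^ 3 * x 4 := by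
  rw [segreQuarticFun, hx]
  linear_combination x 2 ^ 4 * segreAlpha_pow_four_sub_six_mul_sq_add_one

lemma smul_add_smul_segreVertex_apply_one_eq {p : Fin 5 → ℂ} (hp : p 1 = segreAlpha * p 2)
    (s t : ℂ) :
    (s • p + t • segreVertex) 1 = segreAlpha * (s • p + t • segreVertex) 2 := by
  simp only [segreVertex, Pi.add_apply, Pi.smul_apply, smul_eq_mul, hp, Matrix.cons_val_one,
    Matrix.cons_val]
  ring

lemma segreQuarticFun_smul_add_smul_segreVertex {p : Fin 5 → ℂ}
    (hp : p 1 = segreAlpha * p 2) (s t : ℂ) :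
    segreQuarticFun (s • p + t • segreVertex) = s ^ 4 * segreQuarticFun p := by
  rw [segreQuarticFun_eq_of_apply_one_eq (smul_add_smul_segreVertex_apply_one_eq hp s t),
    segreQuarticFun_eq_of_apply_one_eq hp]
  simp only [segreVertex, Pi.add_apply, Pi.smul_apply, smul_eq_mul, Matrix.cons_val_zero,
    Matrix.cons_val, mul_zero, add_zero]
  ring

/-- (i) `F(v) = 0` and `v₁ = α·v₂`, so `o = [0 : α : 1 : 0 : 0]` lies on the Segre quartic
`X = {F = 0}` and on the hyperplane `Π = {x₁ = αx₂}`; and (ii) for every `p ∈ ℂ⁵` with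
`F(p) = 0` and `p₁ = α·p₂` and all `s t : ℂ`, the point `s·p + t·v` again satisfies
`F = 0` and `x₁ = α·x₂`.  Hence `X ∩ Π` is a cone with vertex `o`. -/
theorem segre_section_is_cone :
    segreQuarticFun segreVertex = 0 ∧
    segreVertex 1 = (segreAlpha : ℂ) * segreVertex 2 ∧
    ∀ p : Fin 5 → ℂ, segreQuarticFun p = 0 → p 1 = (segreAlpha : ℂ) * p 2 →
      ∀ s t : ℂ,
        segreQuarticFun (s • p + t • segreVertex) = 0 ∧
        (s • p + t • segreVertex) 1 = (segreAlpha : ℂ) * (s • p + t • segreVertex) 2 := by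
  have hvertex : segreVertex 1 = (segreAlpha : ℂ) * segreVertex 2 := by simp [segreVertex]
  refine ⟨?_, hvertex, fun p hF hp s t => ⟨?_, smul_add_smul_segreVertex_apply_one_eq hp s t⟩⟩
  · rw [segreQuarticFun_eq_of_apply_one_eq hvertex]
    simp [segreVertex]
  · rw [segreQuarticFun_smul_add_smul_segreVertex hp, hF, mul_zero]
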